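/- For every integer k ≥ 0 and indeterminate x, the formal power series identity holds: -(x²+x)·A_{2k,x}(y) - y²·A''_{2k,x}(y) + 2xy·A'_{2k,x}(y) + (x²-x)·A_{2k,x-1}(y) = y·A''_{2k,x}(y) - 2·A'_{2k,x}(y) + (2/(2k-1))·Σ_{h≥k} (2h-4k+3)·C(2h, 2k-2)·A_{2h,x}(y)/y, where A_{k,x}(y) = (1/k!)(1+y)^x log^k(1+y). -/

import Mathlib

open Finset

/-- Generalized binomial coefficient `C(x, n) = x(x-1)⋯(x-n+1)/n!` as a function of `x : ℚ`. -/
noncomputable def myChoose (x : ℚ) (n : ℕ) : ℚ :=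
  (∏ i ∈ Finset.range n, (x - (i : ℚ))) / (n.factorial : ℚ)

/-- Unsigned Stirling numbers of the first kind, `(x)_n = Σ_k stirling1 n k · x^k`. -/
def stirling1 : ℕ → ℕ → ℕ
  | 0, 0 => 1
  | 0, _ + 1 => 0
  | n + 1, 0 => n * stirling1 n 0
  | n + 1, k + 1 => n * stirling1 n (k + 1) + stirling1 n k

/-- Stirling numbers of the second kind. -/
def stirling2 : ℕ → ℕ → ℕ
  | 0, 0 => 1
  | 0, _ + 1 => 0
  | _ + 1, 0 => 0
  | n + 1, k + 1 => (k + 1) * stirling2 n (k + 1) + stirling2 n k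

/-- The formal power series `log(1+y) = Σ_{n ≥ 1} (-1)^{n-1} y^n / n`. -/
noncomputable def log1p : PowerSeries ℚ :=
  PowerSeries.mk fun n => if n = 0 then 0 else (-1 : ℚ) ^ (n + 1) / (n : ℚ)

/-- The formal binomial series `(1+y)^x = Σ_n C(x,n) y^n`. -/
noncomputable def binomSeries (x : ℚ) : PowerSeries ℚ :=
  PowerSeries.mk fun n => myChoose x n

/-- `A_{k,x}(y) = (1/k!) (1+y)^x log^k(1+y)`. -/
noncomputable def Aser (k : ℕ) (x : ℚ) : PowerSeries ℚ :=
  ((k.factorial : ℚ)⁻¹) • (binomSeries x * log1p ^ k)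

/-- Formal derivative in `y`. -/
noncomputable def Dy (f : PowerSeries ℚ) : PowerSeries ℚ :=
  PowerSeries.mk fun n => ((n + 1 : ℕ) : ℚ) * PowerSeries.coeff (n + 1) f

/-!
Write `u = 1 + y`, `L = log (1 + y)` and `B = (1 + y)^x`. From `u B' = x B`, `u L' = 1` and
`u B_{x-1} = B` one gets `u A_{m+1}' = x A_{m+1} + A_m`, and eliminating `A''` shows that `u` times
the difference of the two sides without the tail is `(2 + y) A_{2k-1} - y A_{2k-2}` (and `0` for
`k = 0`). In the tail, `C(2h, 2k-2) A_{2h} = B L^{2k-2}/(2k-2)! · L^{2i}/(2i)!` with `i = h - k + 1`,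
so the tail is `B L^{2k-2}/(2k-2)!` times `G(L)/y` for `G(z) = z sinh z - (2k-1)(cosh z - 1)`.
Since `exp (± L) = u^{±1}`, `G(L) = y ((2 + y) L - (2k-1) y)/(2u)`, so `u` times the tail is
again `(2 + y) A_{2k-1} - y A_{2k-2}`.
-/

open PowerSeries Finset

lemma Dy_eq_derivative (f : ℚ⟦X⟧) : Dy f = d⁄dX ℚ f := by
  ext n
  simp [Dy, coeff_derivative, mul_comm]

lemma one_add_X_ne_zero {R : Type*} [Ring R] [Nontrivial R] : (1 + X : R⟦X⟧) ≠ 0 :=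
  fun h => by simpa using congrArg constantCoeff h

lemma myChoose_eq_choose (x : ℚ) (n : ℕ) : myChoose x n = Ring.choose x n := by
  rw [Ring.choose_eq_smul, myChoose, smul_eq_mul, div_eq_inv_mul,
    ← descPochhammer_eval_eq_prod_range, ← Polynomial.aeval_eq_smeval,
    ← descPochhammer_map (algebraMap ℤ ℚ), Polynomial.eval_map_algebraMap]

lemma binomSeries_eq_binomialSeries (x : ℚ) : binomSeries x = PowerSeries.binomialSeries ℚ x := by
  ext n
  simp [binomSeries, myChoose_eq_choose]

lemma one_add_X_mul_binomSeries_sub_one (x : ℚ) :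
    (1 + X) * binomSeries (x - 1) = binomSeries x := by
  have h1 : PowerSeries.binomialSeries ℚ (1 : ℚ) = 1 + X := by
    simpa using PowerSeries.binomialSeries_nat (A := ℚ) (R := ℚ) 1
  rw [binomSeries_eq_binomialSeries, binomSeries_eq_binomialSeries, ← h1,
    ← PowerSeries.binomialSeries_add, add_sub_cancel]

lemma derivative_binomSeries (x : ℚ) : d⁄dX ℚ (binomSeries x) = x • binomSeries (x - 1) := by
  ext n
  have h := Ring.choose_smul_choose x (Nat.le_add_left 1 n)
  simp only [binomSeries_eq_binomialSeries, coeff_derivative, binomialSeries_coeff,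
    coeff_smul] at h ⊢
  simpa [mul_comm] using h

lemma one_add_X_mul_derivative_binomSeries (x : ℚ) :
    (1 + X) * d⁄dX ℚ (binomSeries x) = x • binomSeries x := by
  rw [derivative_binomSeries, mul_smul_comm, one_add_X_mul_binomSeries_sub_one]

lemma log1p_eq_log : log1p = PowerSeries.log ℚ := by
  ext n
  simp [log1p]

lemma constantCoeff_log1p : constantCoeff log1p = 0 := by
  rw [log1p_eq_log, constantCoeff_log]

lemma hasSubst_log1p : HasSubst log1p := HasSubst.of_constantCoeff_zero' constantCoeff_log1p

lemma one_add_X_mul_derivative_log1p : (1 + X) * d⁄dX ℚ log1p = 1 := by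
  ext n
  rw [log1p_eq_log, deriv_log, add_mul, one_mul, map_add]
  rcases n with _ | n
  · simp
  · simp [coeff_succ_X_mul, pow_succ]

lemma one_add_X_mul_derivative_log1p_pow (m : ℕ) :
    (1 + X) * d⁄dX ℚ (log1p ^ (m + 1)) = ((m + 1 : ℕ) : ℚ) • log1p ^ m := by
  rw [Derivation.leibniz_pow, Nat.add_sub_cancel, smul_eq_mul, nsmul_eq_mul,
    Nat.cast_smul_eq_nsmul, nsmul_eq_mul]
  linear_combination ((m + 1 : ℕ) * log1p ^ m) * one_add_X_mul_derivative_log1p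

lemma one_add_X_mul_Aser_sub_one (m : ℕ) (x : ℚ) : (1 + X) * Aser m (x - 1) = Aser m x := by
  rw [Aser, Aser, mul_smul_comm, ← mul_assoc, one_add_X_mul_binomSeries_sub_one]

lemma one_add_X_mul_derivative_Aser_zero (x : ℚ) :
    (1 + X) * d⁄dX ℚ (Aser 0 x) = x • Aser 0 x := by
  simp [Aser, one_add_X_mul_derivative_binomSeries]

lemma one_add_X_mul_derivative_Aser_succ (m : ℕ) (x : ℚ) :
    (1 + X) * d⁄dX ℚ (Aser (m + 1) x) = x • Aser (m + 1) x + Aser m x := by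
  have hB := one_add_X_mul_derivative_binomSeries x
  have hL := one_add_X_mul_derivative_log1p_pow m
  have hfac : C ((m + 1).factorial : ℚ)⁻¹ * C ((m + 1 : ℕ) : ℚ) = C (m.factorial : ℚ)⁻¹ := by
    rw [← map_mul, Nat.factorial_succ]; push_cast; field_simp
  rw [Aser, Aser, Derivation.map_smul, Derivation.leibniz]
  simp only [smul_eq_C_mul, smul_eq_mul] at hB hL ⊢
  linear_combination C ((m + 1).factorial : ℚ)⁻¹ * (log1p ^ (m + 1) * hB + binomSeries x * hL)
    + binomSeries x * log1p ^ m * hfac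

lemma one_add_X_mul_differential_expression {R : Type*} [CommRing R] (x : R)
    {F Fprev G H : R⟦X⟧} (hF : (1 + X) * d⁄dX R F = x • F + G)
    (hG : (1 + X) * d⁄dX R G = x • G + H) (hFprev : (1 + X) * Fprev = F) :
    (1 + X) * (-((x ^ 2 + x) • F) - X ^ 2 * d⁄dX R (d⁄dX R F) + (2 * x) • (X * d⁄dX R F)
        + (x ^ 2 - x) • Fprev - (X * d⁄dX R (d⁄dX R F) - (2 : R) • d⁄dX R F))
      = (2 + X) * G - X * H := by
  have hF' := congrArg (d⁄dX R) hF
  simp only [Derivation.leibniz, map_add, Derivation.map_smul, derivative_X,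
    Derivation.map_one_eq_zero, smul_eq_mul] at hF'
  simp only [smul_eq_C_mul, map_add, map_sub, map_mul, map_pow, map_ofNat] at hF hG hF' ⊢
  linear_combination (X * (C x + 1) + 2) * hF - X * hG - X * (1 + X) * hF'
    + (C x ^ 2 - C x) * hFprev

lemma constantCoeff_subst_of_constantCoeff_eq_zero {R : Type*} [CommRing R] {a : R⟦X⟧}
    (ha : constantCoeff a = 0) (f : R⟦X⟧) : constantCoeff (f.subst a) = constantCoeff f := by
  rw [← coeff_zero_eq_constantCoeff_apply, coeff_subst' (HasSubst.of_constantCoeff_zero' ha),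
    finsum_eq_single _ 0]
  · simp
  · intro d hd
    simp [coeff_zero_eq_constantCoeff, ha, zero_pow hd]

lemma exp_subst_log1p_mul_evalNegHom_exp_subst_log1p :
    (exp ℚ).subst log1p * (evalNegHom (exp ℚ)).subst log1p = 1 := by
  rw [← subst_mul hasSubst_log1p, exp_mul_exp_neg_eq_one, ← coe_substAlgHom hasSubst_log1p,
    map_one]

/- `exp L` solves `u f' = f`, so differentiating `exp L · exp (-L) = 1` gives `(u exp (-L))' = 0`. -/
lemma one_add_X_mul_evalNegHom_exp_subst_log1p :
    (1 + X) * (evalNegHom (exp ℚ)).subst log1p = 1 := by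
  set E := (exp ℚ).subst log1p
  set E' := (evalNegHom (exp ℚ)).subst log1p
  have hEE' : E * E' = 1 := exp_subst_log1p_mul_evalNegHom_exp_subst_log1p
  have hdE : (1 + X) * d⁄dX ℚ E = E := by
    rw [derivative_subst hasSubst_log1p, derivative_exp]
    linear_combination E * one_add_X_mul_derivative_log1p
  have hd : d⁄dX ℚ E * E' + E * d⁄dX ℚ E' = 0 := by
    simpa [Derivation.leibniz, add_comm, mul_comm] using congrArg (d⁄dX ℚ) hEE'
  apply derivative.ext
  · simp only [Derivation.leibniz, map_add, derivative_X, Derivation.map_one_eq_zero, smul_eq_mul]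
    linear_combination -(E' + (1 + X) * d⁄dX ℚ E') * hEE' + (1 + X) * E' * hd - E' ^ 2 * hdE
  · rw [map_mul, constantCoeff_subst_of_constantCoeff_eq_zero constantCoeff_log1p,
      ← coeff_zero_eq_constantCoeff_apply (evalNegHom _), evalNegHom, coeff_rescale]
    simp

lemma exp_subst_log1p : (exp ℚ).subst log1p = 1 + X := by
  linear_combination (1 + X) * exp_subst_log1p_mul_evalNegHom_exp_subst_log1p
    - (exp ℚ).subst log1p * one_add_X_mul_evalNegHom_exp_subst_log1p

lemma coeff_mul_subst_eq_sum {R : Type*} [CommRing R] {a : R⟦X⟧} (ha : constantCoeff a = 0)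
    (f H : R⟦X⟧) (q : ℕ) (s : Finset ℕ) (hs : ∀ m ≤ q, coeff m H ≠ 0 → m ∈ s) :
    coeff q (f * H.subst a) = ∑ m ∈ s, coeff m H * coeff q (f * a ^ m) := by
  have hpow : ∀ m, X ^ m ∣ a ^ m := fun m => pow_dvd_pow_of_dvd (X_dvd_iff.mpr ha) m
  have hsubst : ∀ l ≤ q,
      coeff l (H.subst a) = ∑ m ∈ range (q + 1), coeff m H * coeff l (a ^ m) := by
    intro l hl
    rw [coeff_subst' (HasSubst.of_constantCoeff_zero' ha),
      finsum_eq_sum_of_support_subset _ (s := range (q + 1))]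
    · rfl
    · intro m hm
      by_contra hmq
      exact hm (by simp only [X_pow_dvd_iff.mp (hpow m) l (by simp at hmq; omega), smul_zero])
  have hrange :
      coeff q (f * H.subst a) = ∑ m ∈ range (q + 1), coeff m H * coeff q (f * a ^ m) := by
    rw [coeff_mul, sum_congr rfl fun p hp => by
      rw [hsubst p.2 (by rw [HasAntidiagonal.mem_antidiagonal] at hp; omega)]]
    simp only [mul_sum, coeff_mul]
    rw [sum_comm]
    exact sum_congr rfl fun m _ => sum_congr rfl fun p _ => by ring
  rw [hrange, ← sum_subset (inter_subset_left (s₁ := range (q + 1)) (s₂ := s)),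
    ← sum_subset (inter_subset_right (s₁ := range (q + 1)) (s₂ := s))]
  · intro m hms hm
    have hmq : q < m := by simp_all
    rw [X_pow_dvd_iff.mp ((hpow m).mul_left f) q hmq, mul_zero]
  · intro m hmq hm
    have hH : coeff m H = 0 := by
      by_contra h
      exact hm (mem_inter.mpr ⟨hmq, hs m (by simp at hmq; omega) h⟩)
    rw [hH, zero_mul]

lemma X_mul_mk_coeff_succ {R : Type*} [Semiring R] {f : R⟦X⟧} (hf : constantCoeff f = 0) :
    X * PowerSeries.mk (fun n => coeff (n + 1) f) = f := by
  conv_rhs => rw [eq_X_mul_shift_add_const f, hf, map_zero, add_zero]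

/- `2 (z sinh z - c (cosh z - 1))`; for `c = 2k - 1` its coefficients are the weights of the
tail. -/
noncomputable def xSinhSubCosh (c : ℚ) : ℚ⟦X⟧ :=
  X * (exp ℚ - evalNegHom (exp ℚ)) - c • ((exp ℚ - 1) + (evalNegHom (exp ℚ) - 1))

lemma coeff_xSinhSubCosh (c : ℚ) (p : ℕ) :
    coeff p (xSinhSubCosh c) = if p = 0 then 0 else (1 + (-1) ^ p) * (p - c) / p.factorial := by
  rcases p with _ | p
  · simp [xSinhSubCosh, evalNegHom, coeff_rescale, coeff_zero_X_mul, -coeff_zero_eq_constantCoeff]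
  · simp [xSinhSubCosh, evalNegHom, coeff_rescale, coeff_succ_X_mul, Nat.factorial_succ]
    field_simp
    ring

lemma one_add_X_mul_xSinhSubCosh_subst_log1p (c : ℚ) :
    (1 + X) * (xSinhSubCosh c).subst log1p = X * ((2 + X) * log1p - c • X) := by
  have hV := one_add_X_mul_evalNegHom_exp_subst_log1p
  rw [xSinhSubCosh, ← coe_substAlgHom hasSubst_log1p]
  simp only [map_sub, map_add, map_mul, map_smul, map_one, coe_substAlgHom, exp_subst_log1p,
    subst_X hasSubst_log1p] at hV ⊢
  simp only [smul_eq_C_mul]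
  linear_combination -(log1p + C c) * hV

lemma sum_Icc_mul_coeff_Aser (j : ℕ) (x : ℚ) (q : ℕ) :
    ∑ h ∈ Icc (j + 1) q,
        ((2 * (h : ℚ) - 4 * ((j : ℚ) + 1) + 3) * ((2 * h).choose (2 * j) : ℚ))
          * coeff q (Aser (2 * h) x)
      = coeff q (C (2 * ((2 * j).factorial : ℚ))⁻¹
          * (binomSeries x * (X ^ (2 * j) * xSinhSubCosh (2 * j + 1)).subst log1p)) := by
  have hs : ∀ m ≤ q, coeff m (X ^ (2 * j) * xSinhSubCosh (2 * j + 1)) ≠ 0 →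
      m ∈ (Icc (j + 1) q).image (2 * ·) := by
    intro m hmq hm
    rw [coeff_X_pow_mul', coeff_xSinhSubCosh] at hm
    split_ifs at hm with hjm hm0
    · exact absurd rfl hm
    · obtain ⟨i, hi⟩ : Even (m - 2 * j) := by
        by_contra hodd
        rw [Nat.not_even_iff_odd] at hodd
        exact hm (by rw [hodd.neg_one_pow]; ring)
      simp only [mem_image, mem_Icc]
      exact ⟨j + i, ⟨by omega, by omega⟩, by omega⟩
    · exact absurd rfl hm
  rw [coeff_C_mul, coeff_mul_subst_eq_sum constantCoeff_log1p _ _ q _ hs,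
    sum_image (by intro a _ b _ h; simpa using h), mul_sum]
  refine sum_congr rfl fun h hh => ?_
  rw [mem_Icc] at hh
  have hjh : 2 * j ≤ 2 * h := by omega
  have hsub : 2 * h - 2 * j = 2 * (h - j) := by omega
  rw [Aser, coeff_smul, coeff_X_pow_mul', if_pos hjh, coeff_xSinhSubCosh, if_neg (by omega),
    Nat.cast_choose ℚ hjh, hsub, (even_two_mul (h - j)).neg_one_pow, smul_eq_mul]
  push_cast [Nat.cast_sub (by omega : j ≤ h)]
  field_simp
  ring

lemma one_add_X_mul_tail (j : ℕ) (x : ℚ) :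
    (1 + X) * (2 / (2 * ((j : ℚ) + 1) - 1)) • (PowerSeries.mk fun n =>
        ∑ h ∈ Icc (j + 1) (n + 1),
          ((2 * (h : ℚ) - 4 * ((j : ℚ) + 1) + 3) * ((2 * h).choose (2 * j) : ℚ))
            * coeff (n + 1) (Aser (2 * h) x))
      = (2 + X) * Aser (2 * j + 1) x - X * Aser (2 * j) x := by
  have hconst := sum_Icc_mul_coeff_Aser j x 0
  rw [Icc_eq_empty (by omega), sum_empty, coeff_zero_eq_constantCoeff_apply] at hconst
  have hK := one_add_X_mul_xSinhSubCosh_subst_log1p (2 * j + 1)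
  have h2j : (2 * (j : ℚ) + 1) ≠ 0 := by positivity
  have hodd : C (2 / (2 * ((j : ℚ) + 1) - 1)) * C (2 * ((2 * j).factorial : ℚ))⁻¹
      = C ((2 * j + 1).factorial : ℚ)⁻¹ := by
    rw [← map_mul, Nat.factorial_succ, show 2 * ((j : ℚ) + 1) - 1 = 2 * j + 1 by ring]
    congr 1; push_cast; field_simp
  have heven : C ((2 * j + 1).factorial : ℚ)⁻¹ * C (2 * (j : ℚ) + 1)
      = C ((2 * j).factorial : ℚ)⁻¹ := by
    rw [← map_mul, Nat.factorial_succ]; congr 1; push_cast; field_simp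
  apply mul_left_cancel₀ (X_ne_zero (R := ℚ))
  simp only [sum_Icc_mul_coeff_Aser]
  rw [mul_left_comm, mul_smul_comm, X_mul_mk_coeff_succ hconst.symm, subst_mul hasSubst_log1p,
    subst_pow hasSubst_log1p, subst_X hasSubst_log1p]
  simp only [Aser, smul_eq_C_mul] at hK ⊢
  linear_combination
    C (2 / (2 * ((j : ℚ) + 1) - 1)) * C (2 * ((2 * j).factorial : ℚ))⁻¹ * binomSeries x
        * log1p ^ (2 * j) * hK
      + X * binomSeries x * log1p ^ (2 * j) * ((2 + X) * log1p - X * C (2 * (j : ℚ) + 1)) * hodd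
      - X ^ 2 * binomSeries x * log1p ^ (2 * j) * heven

/-- The tail `Σ_{h ≥ k} ⋯ A_{2h,x}/y` is encoded coefficientwise (its `y^n`-coefficient is a finite
sum since `A_{2h,x}` has order `2h`); for `k = 0` the binomial `C(2h, 2k-2) = C(2h,-2)` is `0`. -/
theorem stmt2 (k : ℕ) (x : ℚ) :
    -((x ^ 2 + x) • Aser (2 * k) x) - PowerSeries.X ^ 2 * Dy (Dy (Aser (2 * k) x))
        + (2 * x) • (PowerSeries.X * Dy (Aser (2 * k) x)) + (x ^ 2 - x) • Aser (2 * k) (x - 1) =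
      PowerSeries.X * Dy (Dy (Aser (2 * k) x)) - (2 : ℚ) • Dy (Aser (2 * k) x)
        + (2 / (2 * (k : ℚ) - 1)) • (PowerSeries.mk fun n =>
            ∑ h ∈ Finset.Icc k (n + 1),
              ((2 * (h : ℚ) - 4 * (k : ℚ) + 3) *
                  (if 1 ≤ k then ((2 * h).choose (2 * k - 2) : ℚ) else 0)) *
                PowerSeries.coeff (n + 1) (Aser (2 * h) x)) := by
  simp only [Dy_eq_derivative]
  apply mul_left_cancel₀ one_add_X_ne_zero
  rcases k with _ | j
  · have hE := one_add_X_mul_differential_expression x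
      ((one_add_X_mul_derivative_Aser_zero x).trans (add_zero _).symm) (H := 0) (by simp)
      (one_add_X_mul_Aser_sub_one 0 x)
    have hT : (PowerSeries.mk fun _ => (0 : ℚ)) = 0 := by ext; simp
    simp only [Nat.le_zero, one_ne_zero, if_false, mul_zero, zero_mul, sum_const_zero, hT,
      smul_zero, add_zero] at hE ⊢
    linear_combination hE
  · have hE := one_add_X_mul_differential_expression x (F := Aser (2 * (j + 1)) x)
      (one_add_X_mul_derivative_Aser_succ (2 * j + 1) x)
      (one_add_X_mul_derivative_Aser_succ (2 * j) x) (one_add_X_mul_Aser_sub_one _ x)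
    have h2j : 2 * (j + 1) - 2 = 2 * j := by omega
    simp only [Nat.cast_add, Nat.cast_one, le_add_iff_nonneg_left, zero_le, if_true, h2j]
    linear_combination hE - one_add_X_mul_tail j x
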